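/- arXiv:2111.11568 — 2 statements merged into one kernel-verified Lean document; each statement's English description precedes it below -/
import Mathlib

section
/- Let G be a finite nilpotent group. There is no nontrivial abelian normal subgroup N of G with [N,G] = N. Consequently, if a finite nilpotent group G is unramified over a nontrivial abelian normal subgroup N, then [N,G] = G′. -/
open scoped BigOperators

noncomputable def charInner (G : Type) [Group G] (φ ψ : G → ℂ) : ℂ :=
  (Nat.card G : ℂ)⁻¹ * ∑ᶠ g, φ g * (starRingEnd ℂ) (ψ g)

/-- `χ` is the character of some irreducible complex representation of `G`. -/
def IsIrrChar (G : Type) [Group G] (χ : G → ℂ) : Prop :=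
  ∃ ρ : FDRep ℂ G, CategoryTheory.Simple ρ ∧ FDRep.character ρ = χ

/-- A class function is multiplicity free if it pairs with each irreducible
character with multiplicity at most one. -/
def MultFree (G : Type) [Group G] (φ : G → ℂ) : Prop :=
  ∀ μ : G → ℂ, IsIrrChar G μ → charInner G φ μ = 0 ∨ charInner G φ μ = 1

/-- `G` is unramified over `N`: every irreducible character of `G` restricts to `N`
multiplicity-freely or as a multiple of the trivial character. -/
def UnramifiedOver (G : Type) [Group G] (N : Subgroup G) : Prop :=
  ∀ χ : G → ℂ, IsIrrChar G χ →
    MultFree N (fun n : N => χ n) ∨ ∀ n : N, χ n = χ 1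

def PseudoUnramifiedOver (G : Type) [Group G] (N : Subgroup G) : Prop :=
  ∀ μ : ↥N → ℂ, IsIrrChar ↥N μ →
    ∃ χ : G → ℂ, IsIrrChar G χ ∧ charInner ↥N (fun n : N => χ n) μ ≠ 0 ∧
      MultFree ↥N (fun n : N => χ n)

/-- The conjugate character `ᵍμ(n) = μ(g⁻¹ n g)`. -/
def conjChar {G : Type} [Group G] (N : Subgroup G) [hN : N.Normal] (g : G)
    (μ : ↥N → ℂ) : ↥N → ℂ :=
  fun n => μ ⟨g⁻¹ * ↑n * g, hN.conj_mem' ↑n n.2 g⟩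

lemma conjChar_mul {G : Type} [Group G] (N : Subgroup G) [N.Normal] (a b : G)
    (μ : ↥N → ℂ) : conjChar N (a * b) μ = conjChar N a (conjChar N b μ) := by
  funext n
  simp [conjChar, mul_assoc]

lemma conjChar_one {G : Type} [Group G] (N : Subgroup G) [N.Normal]
    (μ : ↥N → ℂ) : conjChar N 1 μ = μ := by
  funext n
  simp [conjChar]

/-- The inertia subgroup of μ. -/
def inertia {G : Type} [Group G] (N : Subgroup G) [N.Normal] (μ : ↥N → ℂ) :
    Subgroup G where
  carrier := {g | conjChar N g μ = μ}
  one_mem' := conjChar_one N μ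
  mul_mem' := by
    intro a b ha hb
    simp only [Set.mem_setOf_eq] at *
    rw [conjChar_mul, hb, ha]
  inv_mem' := by
    intro a ha
    simp only [Set.mem_setOf_eq] at *
    conv_lhs => rw [← ha]
    rw [← conjChar_mul, inv_mul_cancel, conjChar_one]



/-!
If `⁅N, G⁆ = N` then `N` lies in every term of the lower central series, so `N = 1`.

Write `M = ⁅N, G⁆ < N`. For an irreducible representation of `G` with `M` in its kernel, `N/M`
is central in `G/M`, so by Schur `N` acts through a linear character `λ` and the character
restricts to `N` as `χ(1) λ`; being unramified forces `χ(1) = 1` or `λ = 1`. Applied to a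
representation separating some `n ∈ N \ M` from `M`, this yields a linear character `μ` of `G/M`
with `μ(n) ≠ 1`. If some irreducible `χ` of `G/M` were not linear, both `χ` and its twist `μ χ`
would be trivial on `N`, which `μ(n) ≠ 1` forbids. So every irreducible representation of `G/M`
is linear, `G/M` is abelian, and `G′ ≤ M`.
-/

open CategoryTheory Module
open scoped commutatorElement

namespace Subrepresentation

variable {k G V : Type*} [Field k] [AddCommGroup V] [Module k V] [Monoid G]
  {ρ : Representation k G V}

def toRepresentationOrderIso (W : Subrepresentation ρ) :
    Subrepresentation W.toRepresentation ≃o Set.Iic W where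
  toFun U := ⟨⟨U.toSubmodule.map W.toSubmodule.subtype, by
      rintro g _ ⟨v, hv, rfl⟩
      exact ⟨_, U.apply_mem_toSubmodule g hv, rfl⟩⟩, by
    rintro _ ⟨v, -, rfl⟩
    exact v.2⟩
  invFun U := ⟨U.1.toSubmodule.comap W.toSubmodule.subtype, fun g v hv ↦
    U.1.apply_mem_toSubmodule g hv⟩
  left_inv U := toSubmodule_injective <|
    Submodule.comap_map_eq_of_injective W.toSubmodule.injective_subtype _
  right_inv U := Subtype.ext <| toSubmodule_injective <|
    (Submodule.map_comap_subtype _ _).trans (inf_eq_right.mpr U.2)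
  map_rel_iff' := Submodule.map_le_map_iff_of_injective W.toSubmodule.injective_subtype _ _

theorem isIrreducible_toRepresentation_of_isAtom {W : Subrepresentation ρ} (hW : IsAtom W) :
    W.toRepresentation.IsIrreducible :=
  W.toRepresentationOrderIso.isSimpleOrder_iff.mpr (Set.isSimpleOrder_Iic_iff_isAtom.mpr hW)

end Subrepresentation

namespace Representation

variable {k G V : Type*} [Field k] [AddCommGroup V] [Module k V]

section Monoid

variable [Monoid G] (ρ : Representation k G V)

def twist (χ : G →* kˣ) : Representation k G V where
  toFun g := (χ g : k) • ρ g
  map_one' := by simp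
  map_mul' g h := by rw [map_mul, map_mul, Units.val_mul, smul_mul_smul_comm]

@[simp]
theorem twist_apply (χ : G →* kˣ) (g : G) : ρ.twist χ g = (χ g : k) • ρ g := rfl

def twistSubrepresentationOrderIso (χ : G →* kˣ) :
    Subrepresentation ρ ≃o Subrepresentation (ρ.twist χ) where
  toFun W := ⟨W.toSubmodule, fun g _ hv ↦ W.toSubmodule.smul_mem _ (W.apply_mem_toSubmodule g hv)⟩
  invFun W := ⟨W.toSubmodule, fun g _ hv ↦
    (W.toSubmodule.smul_mem_iff' (χ g)).mp (W.apply_mem_toSubmodule g hv)⟩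
  left_inv _ := rfl
  right_inv _ := rfl
  map_rel_iff' := Iff.rfl

instance [ρ.IsIrreducible] (χ : G →* kˣ) : (ρ.twist χ).IsIrreducible :=
  (ρ.twistSubrepresentationOrderIso χ).symm.isSimpleOrder

theorem isIrreducible_of_finrank_eq_one (h : finrank k V = 1) : ρ.IsIrreducible :=
  (irreducible_iff_isSimpleModule_asModule ρ).mpr <| (isSimpleModule_iff _ _).mpr <|
    is_simple_module_of_finrank_eq_one (K := k) (V := ρ.asModule) h

theorem IsIrreducible.exists_eq_smul_id [IsAlgClosed k] [FiniteDimensional k V] [ρ.IsIrreducible]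
    {f : V →ₗ[k] V} (hf : ∀ g, f ∘ₗ ρ g = ρ g ∘ₗ f) : ∃ c : k, f = c • LinearMap.id := by
  obtain ⟨c, hc⟩ := IsIrreducible.algebraMap_intertwiningMap_bijective_of_isAlgClosed.2 ⟨f, hf⟩
  exact ⟨c, (congrArg IntertwiningMap.toLinearMap hc).symm⟩

theorem IsIrreducible.nontrivial [ρ.IsIrreducible] : Nontrivial V :=
  IsSimpleModule.nontrivial (MonoidAlgebra k G) ρ.asModule

end Monoid

section Group

variable [Group G] {ρ : Representation k G V}

theorem exists_monoidHom_units_of_forall_eq_smul [Nontrivial V]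
    (h : ∀ g, ∃ c : k, ρ g = c • LinearMap.id) :
    ∃ χ : G →* kˣ, ∀ g, ρ g = (χ g : k) • LinearMap.id := by
  choose c hc using h
  simp only [← Module.algebraMap_end_eq_smul_id] at hc ⊢
  have inj := FaithfulSMul.algebraMap_injective k (Module.End k V)
  let χ : G →* k :=
    { toFun := c
      map_one' := inj (by rw [← hc, map_one, map_one])
      map_mul' := fun a b ↦ inj (by rw [map_mul, ← hc, ← hc, ← hc, map_mul]) }
  exact ⟨χ.toHomUnits, hc⟩

theorem exists_monoidHom_units_of_finrank_eq_one (h : finrank k V = 1) :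
    ∃ χ : G →* kˣ, ∀ g, ρ g = (χ g : k) • LinearMap.id :=
  have := Module.nontrivial_of_finrank_eq_succ h
  exists_monoidHom_units_of_forall_eq_smul fun g ↦
    (LinearMap.existsUnique_eq_smul_id_of_finrank_eq_one h (ρ g)).exists

theorem ker_eq_of_forall_eq_smul [Nontrivial V] {χ : G →* kˣ}
    (hχ : ∀ g, ρ g = (χ g : k) • LinearMap.id) : MonoidHom.ker ρ = χ.ker := by
  ext g
  rw [MonoidHom.mem_ker, MonoidHom.mem_ker, hχ, ← Module.algebraMap_end_eq_smul_id,
    FaithfulSMul.algebraMap_eq_one_iff, Units.val_eq_one]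

theorem commutator_le_ker_of_finrank_eq_one (h : finrank k V = 1) :
    commutator G ≤ MonoidHom.ker ρ := by
  have := Module.nontrivial_of_finrank_eq_succ h
  obtain ⟨χ, hχ⟩ := exists_monoidHom_units_of_finrank_eq_one (ρ := ρ) h
  rw [ker_eq_of_forall_eq_smul hχ]
  exact Abelianization.commutator_subset_ker χ

theorem exists_monoidHom_units_of_commutator_le_ker [IsAlgClosed k] [FiniteDimensional k V]
    [ρ.IsIrreducible] {N : Subgroup G} (hN : ⁅N, ⊤⁆ ≤ MonoidHom.ker ρ) :
    ∃ ψ : N →* kˣ, ∀ m : N, ρ m = (ψ m : k) • LinearMap.id := by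
  have := IsIrreducible.nontrivial ρ
  refine exists_monoidHom_units_of_forall_eq_smul (ρ := ρ.comp N.subtype) fun m ↦
    IsIrreducible.exists_eq_smul_id ρ fun g ↦ ?_
  have h : ρ ⁅(m : G), g⁆ = 1 :=
    hN (Subgroup.commutator_mem_commutator m.2 (Subgroup.mem_top g))
  calc ρ m * ρ g = ρ (⁅(m : G), g⁆ * (g * m)) := by rw [← map_mul]; congr 1; group
    _ = ρ g * ρ m := by rw [map_mul, h, one_mul, map_mul]

open scoped MonoidAlgebra in
theorem exists_isAtom_toRepresentation_ne_one [Finite G] [NeZero (Nat.card G : k)]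
    (ρ : Representation k G V) {g : G} (hg : ρ g ≠ 1) :
    ∃ W : Subrepresentation ρ, IsAtom W ∧ W.toRepresentation g ≠ 1 := by
  by_contra! h
  refine hg (LinearMap.ext fun v ↦ ?_)
  have hv : ρ.asModuleEquiv.symm v ∈
      sSup {m : Submodule k[G] ρ.asModule | IsSimpleModule k[G] m} := by
    rw [IsSemisimpleModule.sSup_simples_eq_top]
    trivial
  rw [sSup_eq_iSup'] at hv
  refine Submodule.iSup_induction _ (motive := fun x ↦ ρ g (ρ.asModuleEquiv x) = ρ.asModuleEquiv x)
    hv (fun m x hx ↦ ?_) (map_zero _) (fun x y hx hy ↦ by simp only [map_add, hx, hy])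
  have hW : IsAtom (Subrepresentation.ofSubmodule' m.1) :=
    (Subrepresentation.subrepresentationSubmoduleOrderIso.isAtom_iff _).mp
      (isSimpleModule_iff_isAtom.mp m.2)
  exact congrArg Subtype.val (LinearMap.congr_fun (h _ hW) ⟨x, hx⟩)

end Group

end Representation

namespace FDRep

variable {k G : Type} [Field k] [Group G]

theorem simple_of_isIrreducible {V : Type} [AddCommGroup V] [Module k V] [FiniteDimensional k V]
    (ρ : Representation k G V) [ρ.IsIrreducible] : Simple (FDRep.of ρ) := by
  have : Simple ((forget₂ (FDRep k G) (Rep k G)).obj (FDRep.of ρ)) := by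
    rw [← simple_obj_iff Rep.toModuleMonoidAlgebra, simple_iff_isSimpleModule']
    exact (Representation.irreducible_iff_isSimpleModule_asModule ρ).mp ‹_›
  exact Functor.simple_of_simple_obj (forget₂ (FDRep k G) (Rep k G)) _

theorem exists_isIrreducible_notMem_ker [Finite G] [NeZero (Nat.card G : k)] (M : Subgroup G)
    [M.Normal] {g : G} (hg : g ∉ M) :
    ∃ X : FDRep k G, Representation.IsIrreducible X.ρ ∧ M ≤ X.ρ.ker ∧ g ∉ X.ρ.ker := by
  let ρ := Representation.ofMulAction k G (G ⧸ M)
  have hM (m : G) (hm : m ∈ M) : ρ m = 1 := by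
    refine MonoidAlgebra.lhom_ext' fun x ↦ LinearMap.ext fun c ↦ ?_
    induction x using QuotientGroup.induction_on with
    | H y =>
      change ρ m (MonoidAlgebra.single _ c) = MonoidAlgebra.single _ c
      rw [Representation.ofMulAction_single, MulAction.Quotient.smul_mk, smul_eq_mul,
        QuotientGroup.mk_mul, (QuotientGroup.eq_one_iff m).mpr hm, one_mul]
  have hρg : ρ g ≠ 1 := by
    intro h
    have := LinearMap.congr_fun h (MonoidAlgebra.single (1 : G ⧸ M) (1 : k))
    rw [Representation.ofMulAction_single, Module.End.one_apply,
      MonoidAlgebra.single_left_inj one_ne_zero, ← QuotientGroup.mk_one, MulAction.Quotient.smul_mk,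
      smul_eq_mul, mul_one, QuotientGroup.mk_one, QuotientGroup.eq_one_iff] at this
    exact hg this
  obtain ⟨W, hW, hWg⟩ := Representation.exists_isAtom_toRepresentation_ne_one ρ hρg
  refine ⟨FDRep.of W.toRepresentation,
    Subrepresentation.isIrreducible_toRepresentation_of_isAtom hW, fun m hm ↦ ?_, hWg⟩
  exact LinearMap.ext fun v ↦ Subtype.ext (LinearMap.congr_fun (hM m hm) v)

end FDRep

theorem Subgroup.eq_bot_of_commutator_top_eq_self {G : Type*} [Group G] [Group.IsNilpotent G]
    {H : Subgroup G} (h : ⁅H, ⊤⁆ = H) : H = ⊥ := by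
  obtain ⟨n, hn⟩ := nilpotent_iff_lowerCentralSeries.mp ‹Group.IsNilpotent G›
  have hle (j : ℕ) : H ≤ (⊤ : Subgroup G).lowerCentralSeries j := by
    induction j with
    | zero => exact le_top
    | succ j ih =>
      rw [lowerCentralSeries_succ]
      exact h.symm.le.trans (Subgroup.commutator_mono ih le_rfl)
  exact le_bot_iff.mp (hn ▸ hle n)

section Unramified

variable {G : Type} [Group G]

theorem charInner_mul_const_self [Finite G] (χ : G →* ℂˣ) (d : ℂ) :
    charInner G (fun g ↦ χ g * d) (fun g ↦ χ g) = d := by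
  have hterm (g : G) : (χ g : ℂ) * d * starRingEnd ℂ (χ g) = d := by
    have hpow : (χ g : ℂ) ^ orderOf g = 1 := by
      rw [← Units.val_pow_eq_pow_val, ← map_pow, pow_orderOf_eq_one, map_one, Units.val_one]
    rw [mul_right_comm, Complex.mul_conj', Complex.norm_eq_one_of_pow_eq_one hpow
      (orderOf_pos g).ne', Complex.ofReal_one, one_pow, one_mul]
  have := Fintype.ofFinite G
  rw [charInner, finsum_eq_sum_of_fintype, Finset.sum_congr rfl fun g _ ↦ hterm g,
    Finset.sum_const, Finset.card_univ, ← Nat.card_eq_fintype_card, nsmul_eq_mul,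
    inv_mul_cancel_left₀ (Nat.cast_ne_zero.mpr Nat.card_pos.ne')]

theorem isIrrChar_coe_units (χ : G →* ℂˣ) : IsIrrChar G (fun g ↦ χ g) := by
  have := Representation.isIrreducible_of_finrank_eq_one (Representation.trivial ℂ G ℂ)
    (finrank_self ℂ)
  refine ⟨FDRep.of ((Representation.trivial ℂ G ℂ).twist χ), FDRep.simple_of_isIrreducible _,
    funext fun g ↦ ?_⟩
  simp [FDRep.character]

variable [Finite G] {N : Subgroup G}

theorem finrank_eq_one_or_le_ker_of_unramifiedOver (hN : UnramifiedOver G N) {V : Type}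
    [AddCommGroup V] [Module ℂ V] [FiniteDimensional ℂ V] (ρ : Representation ℂ G V)
    [ρ.IsIrreducible] (hρ : ⁅N, ⊤⁆ ≤ MonoidHom.ker ρ) :
    finrank ℂ V = 1 ∨ N ≤ MonoidHom.ker ρ := by
  obtain ⟨ψ, hψ⟩ := Representation.exists_monoidHom_units_of_commutator_le_ker hρ
  have hchar (m : N) : FDRep.character (FDRep.of ρ) m = ψ m * finrank ℂ V := by
    change LinearMap.trace ℂ V (ρ m) = _
    rw [hψ, map_smul, LinearMap.trace_id, smul_eq_mul]
  have := Representation.IsIrreducible.nontrivial ρ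
  have hd : (finrank ℂ V : ℂ) ≠ 0 := Nat.cast_ne_zero.mpr finrank_pos.ne'
  rcases hN _ ⟨FDRep.of ρ, FDRep.simple_of_isIrreducible _, rfl⟩ with hmf | htriv
  · left
    have := hmf _ (isIrrChar_coe_units ψ)
    simp only [hchar, charInner_mul_const_self] at this
    exact_mod_cast this.resolve_left hd
  · right
    intro m hm
    have h1 := htriv ⟨m, hm⟩
    rw [hchar, FDRep.char_one, mul_eq_right₀ hd, Units.val_eq_one] at h1
    exact (Representation.ker_eq_of_forall_eq_smul (ρ := ρ.comp N.subtype) hψ).ge h1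

theorem finrank_eq_one_of_unramifiedOver (hN : UnramifiedOver G N) {n : G} (hn : n ∈ N)
    {χ : G →* ℂˣ} (hχN : ⁅N, ⊤⁆ ≤ χ.ker) (hχn : χ n ≠ 1) {V : Type} [AddCommGroup V]
    [Module ℂ V] [FiniteDimensional ℂ V] (ρ : Representation ℂ G V) [ρ.IsIrreducible]
    (hρ : ⁅N, ⊤⁆ ≤ MonoidHom.ker ρ) : finrank ℂ V = 1 := by
  have := Representation.IsIrreducible.nontrivial ρ
  by_contra hd
  have hker := (finrank_eq_one_or_le_ker_of_unramifiedOver hN ρ hρ).resolve_left hd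
  have htwist : ⁅N, ⊤⁆ ≤ MonoidHom.ker (ρ.twist χ) := fun m hm ↦ by
    rw [MonoidHom.mem_ker, Representation.twist_apply, MonoidHom.mem_ker.mp (hρ hm),
      MonoidHom.mem_ker.mp (hχN hm), Units.val_one, one_smul]
  have hn' := (finrank_eq_one_or_le_ker_of_unramifiedOver hN (ρ.twist χ) htwist).resolve_left hd hn
  rw [MonoidHom.mem_ker, Representation.twist_apply, MonoidHom.mem_ker.mp (hker hn),
    ← Algebra.algebraMap_eq_smul_one, FaithfulSMul.algebraMap_eq_one_iff, Units.val_eq_one] at hn'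
  exact hχn hn'

theorem exists_monoidHom_units_of_unramifiedOver [N.Normal] (hN : UnramifiedOver G N) {n : G}
    (hnN : n ∈ N) (hnM : n ∉ ⁅N, (⊤ : Subgroup G)⁆) : ∃ χ : G →* ℂˣ, ⁅N, ⊤⁆ ≤ χ.ker ∧ χ n ≠ 1 := by
  have : (⁅N, ⊤⁆ : Subgroup G).Normal := Subgroup.commutator_normal N ⊤
  obtain ⟨X, hX, hXM, hXn⟩ := FDRep.exists_isIrreducible_notMem_ker (k := ℂ) _ hnM
  have h1 : finrank ℂ X = 1 :=
    (finrank_eq_one_or_le_ker_of_unramifiedOver hN X.ρ hXM).resolve_right fun h ↦ hXn (h hnN)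
  have := Module.nontrivial_of_finrank_eq_succ h1
  obtain ⟨χ, hχ⟩ := Representation.exists_monoidHom_units_of_finrank_eq_one (ρ := X.ρ) h1
  rw [Representation.ker_eq_of_forall_eq_smul hχ] at hXM hXn
  exact ⟨χ, hXM, hXn⟩

theorem commutator_le_of_unramifiedOver [N.Normal] (hN : UnramifiedOver G N) (hne : ⁅N, ⊤⁆ ≠ N) :
    commutator G ≤ ⁅N, ⊤⁆ := by
  have : (⁅N, ⊤⁆ : Subgroup G).Normal := Subgroup.commutator_normal N ⊤
  obtain ⟨n, hnN, hnM⟩ := SetLike.exists_of_lt ((Subgroup.commutator_le_left N ⊤).lt_of_ne hne)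
  obtain ⟨χ, hχM, hχn⟩ := exists_monoidHom_units_of_unramifiedOver hN hnN hnM
  intro g hg
  by_contra hgM
  obtain ⟨X, hX, hXM, hXg⟩ := FDRep.exists_isIrreducible_notMem_ker (k := ℂ) _ hgM
  exact hXg (Representation.commutator_le_ker_of_finrank_eq_one
    (finrank_eq_one_of_unramifiedOver hN hnN hχM hχn X.ρ hXM) hg)

end Unramified

/-- In a finite nilpotent group there is no nontrivial abelian normal subgroup N
with [N,G] = N; consequently if G is unramified over N then [N,G] = G'. -/
theorem stmt_7 {G : Type} [Group G] [Finite G] [Group.IsNilpotent G] :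
    (∀ N : Subgroup G, N.Normal → (∀ a b : ↥N, a * b = b * a) → N ≠ ⊥ →
      ⁅N, (⊤ : Subgroup G)⁆ ≠ N) ∧
    (∀ N : Subgroup G, N.Normal → (∀ a b : ↥N, a * b = b * a) → N ≠ ⊥ →
      UnramifiedOver G N → ⁅N, (⊤ : Subgroup G)⁆ = commutator G) := by
  have hne (N : Subgroup G) (hN : N ≠ ⊥) : ⁅N, (⊤ : Subgroup G)⁆ ≠ N :=
    fun h ↦ hN (Subgroup.eq_bot_of_commutator_top_eq_self h)
  refine ⟨fun N _ _ hN ↦ hne N hN, fun N _ _ hN hU ↦ ?_⟩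
  exact le_antisymm (Subgroup.commutator_mono le_top le_rfl)
    (commutator_le_of_unramifiedOver hU (hne N hN))
end

section
/- Let G be a finite nilpotent group that is unramified over a nontrivial abelian normal subgroup N (so that G/N is abelian, since G′ ⊊ N). Then G is unramified over every abelian normal subgroup M of G containing N. -/
open scoped BigOperators

/-!
For a linear character `σ` of the abelian group `M`, the multiplicity of `σ` in `χ|_M` is
`dim Hom_M(σ, χ) ≤ dim Hom_N(σ|_N, χ) = ⟨χ|_N, σ|_N⟩`, so multiplicity-freeness passes from `N`
to `M`. The remaining irreducible `χ` are trivial on `N`, and they are linear because `G' ≤ N`.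

That `G' ≤ N` holds for every finite nilpotent `G` unramified over a nontrivial normal `N`.
Dividing by `N ∩ Z(G)`, which is nontrivial by nilpotence, reduces to the case `N ≤ Z(G)`.
Then, by Schur, `χ|_N = χ(1) λ` for a linear `λ`, so every irreducible `χ` is trivial on `N` or
linear. Some linear `ψ` is nontrivial on `N`; twisting an irreducible of `G/N` by `ψ` gives an
irreducible that is nontrivial on `N`, hence linear. So all irreducibles of `G/N` are linear, and
`G/N` is abelian because irreducible representations separate the points of a finite group.
-/

open CategoryTheory MonoidalCategory Module
open scoped commutatorElement

theorem Module.End.eq_one_of_pow_eq_one_of_sub_one_sq_eq_zero {K V : Type} [Field K]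
    [CharZero K] [AddCommGroup V] [Module K V] {T : Module.End K V} {n : ℕ} (hn : n ≠ 0)
    (hT : T ^ n = 1) (h : (T - 1) ^ 2 = 0) : T = 1 := by
  set N := T - 1 with hN
  have hN2 : N * N = 0 := by rw [← sq, h]
  have hpow : ∀ k : ℕ, T ^ k = 1 + (k : K) • N := by
    intro k
    induction k with
    | zero => simp
    | succ k ih =>
      rw [pow_succ, ih, ← add_sub_cancel 1 T, ← hN, mul_add, mul_one, add_mul, one_mul,
        smul_mul_assoc, hN2, smul_zero, add_zero, Nat.cast_succ, add_smul, one_smul, add_assoc]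
  rw [hpow n, add_eq_left, smul_eq_zero, hN, sub_eq_zero] at hT
  exact hT.resolve_left (Nat.cast_ne_zero.2 hn)

theorem MonoidHom.commute_of_map_commutatorElement_eq_one {G M : Type} [Group G] [Monoid M]
    (f : G →* M) {a b : G} (h : f ⁅a, b⁆ = 1) : Commute (f a) (f b) := by
  rw [Commute, SemiconjBy, ← map_mul, ← map_mul, ← one_mul (f (b * a)), ← h, ← map_mul,
    commutatorElement_def]
  group

theorem Subgroup.inf_center_ne_bot {G : Type} [Group G] [Group.IsNilpotent G]
    (N : Subgroup G) [N.Normal] (hN : N ≠ ⊥) : N ⊓ Subgroup.center G ≠ ⊥ := by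
  classical
  -- Commutators of elements of the first term `Z_{k+1}` of the upper central series met by `N`
  -- lie in `N ⊓ Z_k = ⊥`.
  have hex : ∃ k, N ⊓ Subgroup.upperCentralSeries G k ≠ ⊥ := by
    obtain ⟨n, hn⟩ := Group.IsNilpotent.nilpotent G
    exact ⟨n, by rwa [hn, inf_top_eq]⟩
  obtain ⟨k, hk⟩ : ∃ k, Nat.find hex = k + 1 := Nat.exists_eq_succ_of_ne_zero fun h0 => by
    simpa [h0] using Nat.find_spec hex
  have hbelow : N ⊓ Subgroup.upperCentralSeries G k = ⊥ := by
    by_contra h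
    have := Nat.find_min' hex h
    omega
  obtain ⟨⟨x, hxN, hxZ⟩, hx⟩ := Subgroup.ne_bot_iff_exists_ne_one.1 (hk ▸ Nat.find_spec hex)
  refine Subgroup.ne_bot_iff_exists_ne_one.2
    ⟨⟨x, hxN, Subgroup.mem_center_iff.2 fun y => ?_⟩, fun h => hx (Subtype.ext congr(($h).1))⟩
  have hcommN : ⁅x, y⁆ ∈ N := by
    rw [commutatorElement_def, mul_assoc, mul_assoc]
    exact N.mul_mem hxN (by simpa [mul_assoc] using ‹N.Normal›.conj_mem _ (N.inv_mem hxN) y)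
  have hcomm : ⁅x, y⁆ ∈ N ⊓ Subgroup.upperCentralSeries G k :=
    ⟨hcommN, Subgroup.mem_upperCentralSeries_succ_iff.1 hxZ y⟩
  rw [hbelow, Subgroup.mem_bot, commutatorElement_eq_one_iff_mul_comm] at hcomm
  exact hcomm.symm

section SurjectiveHom

variable {A B : Type} [Group A] [Group B]

theorem MonoidHom.sum_comp_of_surjective {M : Type} [AddCommMonoid M] [Fintype A] [Fintype B]
    (φ : A →* B) (hφ : Function.Surjective φ) (F : B → M) :
    ∑ a, F (φ a) = Nat.card φ.ker • ∑ b, F b := by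
  classical
  rw [← Finset.sum_fiberwise' Finset.univ φ, Finset.smul_sum]
  refine Finset.sum_congr rfl fun b _ => ?_
  rw [Finset.sum_const, MonoidHom.card_fiber_eq_of_mem_range φ (hφ b) ⟨1, map_one φ⟩,
    Nat.card_eq_fintype_card, Fintype.card_subtype]
  simp [MonoidHom.mem_ker]

theorem MonoidHom.card_eq_card_ker_mul_of_surjective [Finite A] [Finite B] (φ : A →* B)
    (hφ : Function.Surjective φ) : Nat.card A = Nat.card φ.ker * Nat.card B := by
  have := Fintype.ofFinite A
  have := Fintype.ofFinite B
  simpa [Nat.card_eq_fintype_card] using φ.sum_comp_of_surjective hφ (fun _ => (1 : ℕ))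

theorem charInner_comp_of_surjective [Finite A] [Finite B] (φ : A →* B)
    (hφ : Function.Surjective φ) (F F' : B → ℂ) :
    charInner A (fun a => F (φ a)) (fun a => F' (φ a)) = charInner B F F' := by
  have := Fintype.ofFinite A
  have := Fintype.ofFinite B
  have hker : (Nat.card φ.ker : ℂ) ≠ 0 := Nat.cast_ne_zero.2 Nat.card_pos.ne'
  simp only [charInner, finsum_eq_sum_of_fintype]
  rw [φ.sum_comp_of_surjective hφ (fun b => F b * starRingEnd ℂ (F' b)),
    φ.card_eq_card_ker_mul_of_surjective hφ, nsmul_eq_mul, Nat.cast_mul]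
  field_simp

end SurjectiveHom

theorem charInner_eq_zero_or_eq_one_of_le_one {H : Type} [Group H] {φ ψ : H → ℂ} {k : ℕ}
    (h : charInner H φ ψ = k) (hk : k ≤ 1) : charInner H φ ψ = 0 ∨ charInner H φ ψ = 1 := by
  rcases Nat.le_one_iff_eq_zero_or_eq_one.1 hk with rfl | rfl <;> simp [h]

theorem Representation.eq_one_of_fixes_ker_of_fixes_range {K H V : Type} [Field K] [CharZero K]
    [Group H] [Finite H] [AddCommGroup V] [Module K V] {ρ : Representation K H V}
    (g : Representation.IntertwiningMap ρ ρ) {q : H} (hker : ∀ v ∈ g.ker, ρ q v = v)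
    (hrange : ∀ v ∈ g.range, ρ q v = v) : ρ q = 1 := by
  -- `ρ q - 1` maps `V` into `ker g`, on which it vanishes.
  have hsq : (ρ q - 1) ^ 2 = 0 := by
    ext v
    have hu : ρ q v - v ∈ g.ker := by
      rw [Representation.IntertwiningMap.mem_ker, map_sub, g.isIntertwining,
        hrange (g v) ⟨v, rfl⟩, sub_self]
    simp only [sq, Module.End.mul_apply, LinearMap.sub_apply, Module.End.one_apply,
      LinearMap.zero_apply, hker _ hu, sub_self]
  exact Module.End.eq_one_of_pow_eq_one_of_sub_one_sq_eq_zero (orderOf_pos q).ne'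
    (by rw [← map_pow, pow_orderOf_eq_one, map_one]) hsq

namespace FDRep

variable {H : Type} [Group H]

noncomputable abbrev res {K : Type} [Group K] (φ : K →* H) (X : FDRep ℂ H) : FDRep ℂ K :=
  FDRep.of (X.ρ.comp φ)

@[simp]
theorem res_character {K : Type} [Group K] (φ : K →* H) (X : FDRep ℂ H) (k : K) :
    (res φ X).character k = X.character (φ k) := rfl

theorem finrank_invariants_linHom_le_res {K : Type} [Group K] (φ : K →* H) (σ X : FDRep ℂ H) :
    finrank ℂ (Representation.linHom σ.ρ X.ρ).invariants ≤
      finrank ℂ (Representation.linHom (res φ σ).ρ (res φ X).ρ).invariants :=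
  Submodule.finrank_mono fun f hf k => by
    simpa [Representation.linHom_apply] using hf (φ k)

section FinrankOne

variable {X : FDRep ℂ H} (hX : finrank ℂ X = 1)
include hX

theorem ρ_eq_character_smul_one (g : H) : X.ρ g = X.character g • 1 := by
  obtain ⟨c, hc, -⟩ := (X.ρ g).existsUnique_eq_smul_id_of_finrank_eq_one hX
  have hχ : X.character g = c := by
    rw [FDRep.character, hc, map_smul, LinearMap.trace_id, hX]
    simp
  rw [hχ, hc, Module.End.one_eq_id]

theorem character_mul (g g' : H) :
    X.character (g * g') = X.character g * X.character g' := by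
  have h := congrArg (LinearMap.trace ℂ X) (map_mul X.ρ g g')
  rwa [ρ_eq_character_smul_one hX g', mul_smul_comm, mul_one, map_smul, smul_eq_mul,
    mul_comm] at h

theorem character_mul_character_inv (g : H) : X.character g * X.character g⁻¹ = 1 := by
  rw [← character_mul hX, mul_inv_cancel, FDRep.char_one, hX, Nat.cast_one]

theorem character_pow (g : H) (n : ℕ) : X.character (g ^ n) = X.character g ^ n := by
  induction n with
  | zero => rw [pow_zero, pow_zero, FDRep.char_one, hX, Nat.cast_one]
  | succ n ih => rw [pow_succ, pow_succ, character_mul hX, ih]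

theorem star_character [Finite H] (g : H) :
    starRingEnd ℂ (X.character g) = X.character g⁻¹ := by
  have hpow : X.character g ^ orderOf g = 1 := by
    rw [← character_pow hX, pow_orderOf_eq_one, FDRep.char_one, hX, Nat.cast_one]
  rw [← RCLike.inv_eq_conj (Complex.norm_eq_one_of_pow_eq_one hpow (orderOf_pos g).ne'),
    inv_eq_of_mul_eq_one_right (character_mul_character_inv hX g)]

theorem ρ_commutatorElement_eq_one (g g' : H) : X.ρ ⁅g, g'⁆ = 1 := by
  rw [ρ_eq_character_smul_one hX, commutatorElement_def, character_mul hX, character_mul hX,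
    character_mul hX, mul_right_comm (X.character g), character_mul_character_inv hX,
    one_mul, character_mul_character_inv hX, one_smul]

theorem simple_of_finrank_eq_one [Finite H] : Simple X := by
  have := Fintype.ofFinite H
  rw [FDRep.simple_iff_char_is_norm_one]
  simp [character_mul_character_inv hX, Nat.card_eq_fintype_card]

/-- `charInner` conjugates the second character where
`FDRep.scalar_product_char_eq_finrank_equivariant` inverts its argument; this agrees for linear `X`.
-/
theorem charInner_eq_finrank_invariants [Finite H] (Y : FDRep ℂ H) :
    charInner H Y.character X.character =
      finrank ℂ (Representation.linHom X.ρ Y.ρ).invariants := by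
  have := Fintype.ofFinite H
  have := invertibleOfNonzero (Nat.cast_ne_zero.2 Nat.card_pos.ne' : (Nat.card H : ℂ) ≠ 0)
  rw [LinearEquiv.finrank_eq (Representation.linHom.invariantsEquivFDRepHom X Y),
    ← FDRep.scalar_product_char_eq_finrank_equivariant, charInner, finsum_eq_sum_of_fintype]
  simp only [star_character hX]

end FinrankOne

noncomputable def ofMonoidHom (χ : H →* ℂ) : FDRep ℂ H :=
  FDRep.of ((Algebra.lsmul ℂ ℂ ℂ).toMonoidHom.comp χ)

theorem finrank_ofMonoidHom (χ : H →* ℂ) : finrank ℂ (ofMonoidHom χ) = 1 :=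
  Module.finrank_self ℂ

theorem character_ofMonoidHom (χ : H →* ℂ) (g : H) : (ofMonoidHom χ).character g = χ g := by
  have : Algebra.lsmul ℂ ℂ ℂ (χ g) = χ g • LinearMap.id := by ext; simp
  change LinearMap.trace ℂ ℂ (Algebra.lsmul ℂ ℂ ℂ (χ g)) = χ g
  rw [this, map_smul, LinearMap.trace_id, Module.finrank_self, Nat.cast_one, smul_eq_mul,
    mul_one]

theorem finrank_intertwiningMap_eq_finrank_hom (X Y : FDRep ℂ H) :
    finrank ℂ (Representation.IntertwiningMap X.ρ Y.ρ) = finrank ℂ (X ⟶ Y) := by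
  rw [← LinearEquiv.finrank_eq (Representation.invariantsEquivIntertwiningMap X.ρ Y.ρ),
    LinearEquiv.finrank_eq (Representation.linHom.invariantsEquivFDRepHom X Y)]

theorem simple_iff_finrank_intertwiningMap_self [Finite H] (X : FDRep ℂ H) :
    Simple X ↔ finrank ℂ (Representation.IntertwiningMap X.ρ X.ρ) = 1 := by
  rw [FDRep.simple_iff_end_is_rank_one, finrank_intertwiningMap_eq_finrank_hom]

theorem intertwiningMap_one_ne_zero (X : FDRep ℂ H) [Nontrivial X.V] :
    (1 : Representation.IntertwiningMap X.ρ X.ρ) ≠ 0 := fun h => by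
  obtain ⟨v, hv⟩ := exists_ne (0 : X.V)
  exact hv congr($h v)

theorem exists_intertwiningMap_ne_smul_one [Finite H] (X : FDRep ℂ H) [Nontrivial X.V]
    (hX : ¬Simple X) : ∃ f : Representation.IntertwiningMap X.ρ X.ρ, ∀ c : ℂ, f ≠ c • 1 := by
  by_contra! h
  refine hX ((simple_iff_finrank_intertwiningMap_self X).2
    ((finrank_eq_one_iff_of_nonzero' 1 (intertwiningMap_one_ne_zero X)).2 fun f => ?_))
  obtain ⟨c, hc⟩ := h f
  exact ⟨c, hc.symm⟩

section Simple

variable (X : FDRep ℂ H) [Simple X]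

theorem finrank_intertwiningMap_self :
    finrank ℂ (Representation.IntertwiningMap X.ρ X.ρ) = 1 := by
  rw [finrank_intertwiningMap_eq_finrank_hom, FDRep.finrank_hom_simple_simple,
    if_pos ⟨Iso.refl X⟩]

theorem nontrivial_of_simple : Nontrivial X.V := by
  by_contra h
  rw [not_nontrivial_iff_subsingleton] at h
  have : Subsingleton (Representation.IntertwiningMap X.ρ X.ρ) :=
    (Representation.IntertwiningMap.toLinearMap_injective X.ρ X.ρ).subsingleton
  have := finrank_intertwiningMap_self X
  rw [finrank_zero_of_subsingleton] at this
  exact zero_ne_one this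

theorem exists_eq_smul_one_of_commute (f : X.V →ₗ[ℂ] X.V)
    (hf : ∀ g v, f (X.ρ g v) = X.ρ g (f v)) : ∃ c : ℂ, f = c • 1 := by
  have := nontrivial_of_simple X
  obtain ⟨c, hc⟩ := (finrank_eq_one_iff_of_nonzero' _ (intertwiningMap_one_ne_zero X)).mp
    (finrank_intertwiningMap_self X) (f.intertwiningMap_of_isIntertwiningMap _ _ hf)
  exact ⟨c, congrArg Representation.IntertwiningMap.toLinearMap hc.symm⟩

theorem exists_monoidHom_ρ_eq_smul_one_of_le_center {N : Subgroup H}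
    (hNZ : N ≤ Subgroup.center H) : ∃ χ : N →* ℂ, ∀ n : N, X.ρ n = χ n • 1 := by
  have hscalar : ∀ n : N, ∃ c : ℂ, X.ρ n = c • 1 := fun n =>
    exists_eq_smul_one_of_commute X _ fun g v => by
      rw [← Module.End.mul_apply, ← map_mul, ← Module.End.mul_apply, ← map_mul,
        Subgroup.mem_center_iff.1 (hNZ n.2) g]
  choose c hc using hscalar
  have := nontrivial_of_simple X
  refine ⟨{ toFun := c, map_one' := ?_, map_mul' := fun n m => ?_ }, hc⟩ <;>
    refine smul_left_injective ℂ (one_ne_zero (α := Module.End ℂ X.V)) ?_ <;> dsimp only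
  · rw [← hc, Subgroup.coe_one, map_one, one_smul]
  · rw [← hc, Subgroup.coe_mul, map_mul, hc n, hc m, smul_mul_smul_comm, one_mul]

/-- A scalar action gives `χ(g) χ(g⁻¹) = (dim X)²`, so the norm-one criterion for simplicity
forces `dim X = 1`. -/
theorem finrank_eq_one_of_forall_eq_smul_one [Finite H] (hX : ∀ g, ∃ c : ℂ, X.ρ g = c • 1) :
    finrank ℂ X = 1 := by
  have := Fintype.ofFinite H
  have := nontrivial_of_simple X
  choose c hc using hX
  have hcinv : ∀ g, c g * c g⁻¹ = 1 := fun g => by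
    have h := map_mul X.ρ g g⁻¹
    rw [mul_inv_cancel, map_one, hc, hc, smul_mul_smul_comm, one_mul] at h
    exact smul_left_injective ℂ (one_ne_zero (α := Module.End ℂ X.V))
      (h.symm.trans (one_smul ℂ 1).symm)
  have hterm : ∀ g, X.character g * X.character g⁻¹ = (finrank ℂ X : ℂ) ^ 2 := fun g => by
    simp only [FDRep.character, hc, map_smul, LinearMap.trace_one, smul_eq_mul]
    linear_combination (finrank ℂ X : ℂ) ^ 2 * hcinv g
  have hsum := (FDRep.simple_iff_char_is_norm_one X).1 inferInstance
  simp only [hterm, Finset.sum_const, Finset.card_univ, nsmul_eq_mul,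
    Nat.card_eq_fintype_card] at hsum
  have hsq : (finrank ℂ X : ℂ) ^ 2 = 1 :=
    mul_left_cancel₀ (Nat.cast_ne_zero.2 Fintype.card_ne_zero) (hsum.trans (mul_one _).symm)
  simpa using (show finrank ℂ X ^ 2 = 1 by exact_mod_cast hsq)

theorem finrank_eq_one_of_commute [Finite H] (hX : ∀ g g', Commute (X.ρ g) (X.ρ g')) :
    finrank ℂ X = 1 :=
  finrank_eq_one_of_forall_eq_smul_one X fun g =>
    exists_eq_smul_one_of_commute X (X.ρ g) fun g' v => congr($(hX g' g) v).symm

theorem simple_tensor_of_finrank_eq_one [Finite H] {ψ : FDRep ℂ H} (hψ : finrank ℂ ψ = 1) :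
    Simple (ψ ⊗ X) := by
  have := Fintype.ofFinite H
  have hX := (FDRep.simple_iff_char_is_norm_one X).1 inferInstance
  rw [FDRep.simple_iff_char_is_norm_one, FDRep.char_tensor, ← hX]
  refine Finset.sum_congr rfl fun g _ => ?_
  simp only [Pi.mul_apply]
  linear_combination (X.character g * X.character g⁻¹) * character_mul_character_inv hψ g

end Simple

theorem simple_res_of_surjective {K : Type} [Group K] [Finite K] (φ : K →* H)
    (hφ : Function.Surjective φ) (X : FDRep ℂ H) [Simple X] : Simple (res φ X) := by
  have := Fintype.ofFinite K
  have : Finite H := Finite.of_surjective φ hφ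
  have := Fintype.ofFinite H
  have hX := (FDRep.simple_iff_char_is_norm_one X).1 inferInstance
  rw [FDRep.simple_iff_char_is_norm_one]
  simp only [res_character, map_inv]
  rw [φ.sum_comp_of_surjective hφ (fun h => X.character h * X.character h⁻¹), hX,
    φ.card_eq_card_ker_mul_of_surjective hφ]
  push_cast
  ring

/-- The average of the character over `N` is the dimension of the `N`-invariants. -/
theorem ρ_eq_one_of_character_eq_character_one [Finite H] (X : FDRep ℂ H) {N : Subgroup H}
    (hX : ∀ n : N, X.character n = X.character 1) {n : H} (hn : n ∈ N) : X.ρ n = 1 := by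
  have := Fintype.ofFinite N
  have hcard : (Nat.card N : ℂ) ≠ 0 := Nat.cast_ne_zero.2 Nat.card_pos.ne'
  have := invertibleOfNonzero hcard
  have havg := FDRep.average_char_eq_finrank_invariants (res N.subtype X)
  simp only [res_character, Subgroup.coe_subtype, hX, Finset.sum_const, Finset.card_univ,
    nsmul_eq_mul, ← Nat.card_eq_fintype_card, inv_mul_cancel_left₀ hcard, FDRep.char_one,
    Nat.cast_inj] at havg
  have htop := Submodule.eq_top_of_finrank_eq havg.symm
  ext v
  exact (htop ▸ Submodule.mem_top : v ∈ Representation.invariants (res N.subtype X).ρ) ⟨n, hn⟩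

/-- Induction on the dimension: if `V` is not simple, a non-scalar self-intertwiner `f` with
eigenvalue `μ` gives the smaller subrepresentations `ker (f - μ)` and `range (f - μ)`. -/
theorem exists_simple_ρ_ne_one [Finite H] {q : H} (V : FDRep ℂ H) (hV : V.ρ q ≠ 1) :
    ∃ X : FDRep ℂ H, Simple X ∧ X.ρ q ≠ 1 := by
  induction' hd : finrank ℂ V using Nat.strong_induction_on with d ih generalizing V
  by_contra! hno
  have : Nontrivial V.V := by
    by_contra h
    rw [not_nontrivial_iff_subsingleton] at h
    exact hV (Subsingleton.elim _ _)
  have trivial_on : ∀ W : Subrepresentation V.ρ, finrank ℂ W.toSubmodule < d →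
      ∀ w ∈ W, V.ρ q w = w := by
    intro W hW w hw
    by_contra hne
    obtain ⟨X, hX, hXq⟩ := ih _ hW (FDRep.of W.toRepresentation)
      (fun h => hne congr(Subtype.val ($h ⟨w, hw⟩))) rfl
    exact hXq (hno X hX)
  obtain ⟨f, hf⟩ := exists_intertwiningMap_ne_smul_one V fun hs => hV (hno V hs)
  obtain ⟨μ, hμ⟩ := Module.End.exists_eigenvalue f.toLinearMap
  obtain ⟨v₀, hv₀⟩ := hμ.exists_hasEigenvector
  set g := f - μ • 1 with hg
  have hker : LinearMap.ker g.toLinearMap ≠ ⊤ := by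
    rw [Ne, LinearMap.ker_eq_top]
    exact fun h0 => hf μ (sub_eq_zero.1 (Representation.IntertwiningMap.ext h0))
  have hrange : LinearMap.range g.toLinearMap ≠ ⊤ := by
    rw [Ne, LinearMap.range_eq_top, ← LinearMap.injective_iff_surjective]
    refine fun hinj => hv₀.2 (hinj ?_)
    simpa [hg, sub_eq_zero] using hv₀.apply_eq_smul
  refine hV (Representation.eq_one_of_fixes_ker_of_fixes_range g
    (trivial_on g.ker (hd ▸ Submodule.finrank_lt hker))
    (trivial_on g.range (hd ▸ Submodule.finrank_lt hrange)))

theorem eq_one_of_forall_simple_ρ_eq_one [Finite H] {q : H}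
    (hq : ∀ X : FDRep ℂ H, Simple X → X.ρ q = 1) : q = 1 := by
  by_contra hne
  obtain ⟨X, hX, hXq⟩ := exists_simple_ρ_ne_one (FDRep.of (Representation.leftRegular ℂ H))
    fun h => hne <| MonoidAlgebra.single_left_injective one_ne_zero <| by
      simpa using congr($h (MonoidAlgebra.single 1 (1 : ℂ)))
  exact hXq (hq X hX)

end FDRep

namespace UnramifiedOver

variable {G : Type} [Group G] [Finite G] {N : Subgroup G}

theorem map_mk' (h : UnramifiedOver G N) (K : Subgroup G) [K.Normal] :
    UnramifiedOver (G ⧸ K) (N.map (QuotientGroup.mk' K)) := by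
  rintro _ ⟨Y, hY, rfl⟩
  have := FDRep.simple_res_of_surjective _ (QuotientGroup.mk'_surjective K) Y
  rcases h _ ⟨_, this, rfl⟩ with hMF | hconst
  · left
    rintro _ ⟨σ, hσ, rfl⟩
    have hπ := (QuotientGroup.mk' K).subgroupMap_surjective N
    have := FDRep.simple_res_of_surjective _ hπ σ
    convert hMF _ ⟨_, this, rfl⟩ using 2 <;>
      exact (charInner_comp_of_surjective _ hπ (fun m => Y.character m) σ.character).symm
  · right
    rintro ⟨_, n, hn, rfl⟩
    exact hconst ⟨n, hn⟩

theorem ρ_eq_one_or_finrank_eq_one (hNZ : N ≤ Subgroup.center G) (h : UnramifiedOver G N)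
    (X : FDRep ℂ G) [Simple X] : (∀ n ∈ N, X.ρ n = 1) ∨ finrank ℂ X = 1 := by
  obtain ⟨χ, hχ⟩ := X.exists_monoidHom_ρ_eq_smul_one_of_le_center hNZ
  set σ := FDRep.ofMonoidHom χ
  have hσ : finrank ℂ σ = 1 := FDRep.finrank_ofMonoidHom χ
  have hXχ : ∀ n : N, X.character n = finrank ℂ X * σ.character n := fun n => by
    rw [FDRep.character, hχ, map_smul, LinearMap.trace_one, smul_eq_mul, mul_comm,
      FDRep.character_ofMonoidHom]
  rcases h _ ⟨X, ‹_›, rfl⟩ with hMF | hconst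
  · right
    have hinner : charInner N (fun n => X.character n) σ.character = finrank ℂ X := by
      have := Fintype.ofFinite N
      simp only [charInner, finsum_eq_sum_of_fintype, hXχ, FDRep.star_character hσ,
        mul_assoc, FDRep.character_mul_character_inv hσ, mul_one, Finset.sum_const,
        Finset.card_univ, nsmul_eq_mul, ← Nat.card_eq_fintype_card]
      exact inv_mul_cancel_left₀ (Nat.cast_ne_zero.2 Nat.card_pos.ne') _
    have := FDRep.nontrivial_of_simple X
    have := hMF _ ⟨σ, FDRep.simple_of_finrank_eq_one hσ, rfl⟩
    rw [hinner] at this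
    exact_mod_cast this.resolve_left (Nat.cast_ne_zero.2 Module.finrank_pos.ne')
  · exact Or.inl fun n hn => X.ρ_eq_one_of_character_eq_character_one hconst hn

theorem commutatorElement_mem_of_le_center [N.Normal] (hNZ : N ≤ Subgroup.center G)
    (hN : N ≠ ⊥) (h : UnramifiedOver G N) (a b : G) : ⁅a, b⁆ ∈ N := by
  obtain ⟨n₁, hn₁N, hn₁⟩ := (Subgroup.bot_or_exists_ne_one N).resolve_left hN
  obtain ⟨ψ, hψ, hψn₁⟩ : ∃ ψ : FDRep ℂ G, Simple ψ ∧ ψ.ρ n₁ ≠ 1 := by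
    by_contra! hall
    exact hn₁ (FDRep.eq_one_of_forall_simple_ρ_eq_one hall)
  have hψ1 : finrank ℂ ψ = 1 :=
    (h.ρ_eq_one_or_finrank_eq_one hNZ ψ).resolve_left fun h1 => hψn₁ (h1 n₁ hn₁N)
  have hψχ : ψ.character n₁ ≠ 1 := fun h1 => hψn₁ <| by
    rw [FDRep.ρ_eq_character_smul_one hψ1, h1, one_smul]
  refine (QuotientGroup.eq_one_iff _).1 (FDRep.eq_one_of_forall_simple_ρ_eq_one fun Y hY => ?_)
  set X := FDRep.res (QuotientGroup.mk' N) Y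
  have := FDRep.simple_res_of_surjective _ (QuotientGroup.mk'_surjective N) Y
  have := X.simple_tensor_of_finrank_eq_one hψ1
  have hT : ∀ g, (ψ ⊗ X).character g = ψ.character g * X.character g :=
    congrFun (FDRep.char_tensor ψ X)
  have hXn₁ : X.character n₁ = X.character 1 := by
    simp [X, (QuotientGroup.eq_one_iff n₁).2 hn₁N]
  have hX1 : X.character 1 = finrank ℂ Y := FDRep.char_one X
  have hψ1' : ψ.character 1 = 1 := by rw [FDRep.char_one, hψ1, Nat.cast_one]
  rcases h.ρ_eq_one_or_finrank_eq_one hNZ (ψ ⊗ X) with hN1 | hT1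
  · have := FDRep.nontrivial_of_simple X
    have hd : (finrank ℂ Y : ℂ) ≠ 0 := Nat.cast_ne_zero.2 Module.finrank_pos.ne'
    have htr : (ψ ⊗ X).character n₁ = (ψ ⊗ X).character 1 := by
      unfold FDRep.character
      rw [hN1 n₁ hn₁N, (ψ ⊗ X).ρ.map_one]
    rw [hT, hT, hXn₁, hψ1', hX1] at htr
    exact absurd (mul_right_cancel₀ hd htr) hψχ
  · have hY1 : finrank ℂ Y = 1 := by
      have := FDRep.char_one (ψ ⊗ X)
      rw [hT, hT1, hψ1', hX1, one_mul] at this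
      exact_mod_cast this
    show Y.ρ (QuotientGroup.mk' N ⁅a, b⁆) = 1
    rw [map_commutatorElement]
    exact FDRep.ρ_commutatorElement_eq_one hY1 _ _

theorem commutatorElement_mem [Group.IsNilpotent G] [N.Normal] (hN : N ≠ ⊥)
    (h : UnramifiedOver G N) (a b : G) : ⁅a, b⁆ ∈ N := by
  induction' hn : Nat.card G using Nat.strong_induction_on with n ih generalizing G
  by_cases hNZ : N ≤ Subgroup.center G
  · exact h.commutatorElement_mem_of_le_center hNZ hN a b
  set K := N ⊓ Subgroup.center G
  have hK : K ≠ ⊥ := N.inf_center_ne_bot hN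
  have hKN : K < N := lt_of_le_of_ne inf_le_left fun heq => hNZ (heq ▸ inf_le_right)
  have hcard : Nat.card (G ⧸ K) < n := by
    rw [← hn, K.card_eq_card_quotient_mul_card_subgroup]
    exact lt_mul_of_one_lt_right Nat.card_pos ((K.one_lt_card_iff_ne_bot).2 hK)
  have hNK : N.map (QuotientGroup.mk' K) ≠ ⊥ := by
    obtain ⟨x, hxN, hxK⟩ := SetLike.exists_of_lt hKN
    rw [Ne, Subgroup.eq_bot_iff_forall]
    exact fun hall => hxK ((QuotientGroup.eq_one_iff x).1 (hall _ ⟨x, hxN, rfl⟩))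
  have : (N.map (QuotientGroup.mk' K)).Normal :=
    Subgroup.Normal.map ‹_› _ (QuotientGroup.mk'_surjective K)
  have hmem := ih _ hcard hNK (h.map_mk' K) (QuotientGroup.mk' K a) (QuotientGroup.mk' K b) rfl
  rwa [← map_commutatorElement, ← Subgroup.mem_comap, Subgroup.comap_map_eq_self
    (by rw [QuotientGroup.ker_mk']; exact inf_le_left)] at hmem

end UnramifiedOver

theorem stmt_19_general {G : Type} [Group G] [Finite G] [Group.IsNilpotent G]
    (N : Subgroup G) [N.Normal]
    (hbot : N ≠ ⊥) (h : UnramifiedOver G N) (M : Subgroup G)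
    (habM : ∀ a b : ↥M, a * b = b * a) (hNM : N ≤ M) :
    UnramifiedOver G M := by
  rintro _ ⟨X, hX, rfl⟩
  left
  rintro _ ⟨σ, hσ, rfl⟩
  have hσ1 : finrank ℂ σ = 1 := σ.finrank_eq_one_of_commute fun a b => by
    rw [Commute, SemiconjBy, ← map_mul, ← map_mul, habM]
  refine charInner_eq_zero_or_eq_one_of_le_one
    (FDRep.charInner_eq_finrank_invariants hσ1 (FDRep.res M.subtype X)) ?_
  rcases h _ ⟨X, hX, rfl⟩ with hMF | hconst
  · have hσN : finrank ℂ (FDRep.res (Subgroup.inclusion hNM) σ) = 1 := hσ1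
    have hN := FDRep.charInner_eq_finrank_invariants hσN
      (FDRep.res (Subgroup.inclusion hNM) (FDRep.res M.subtype X))
    refine (FDRep.finrank_invariants_linHom_le_res (Subgroup.inclusion hNM) σ _).trans ?_
    rcases hMF _ ⟨_, FDRep.simple_of_finrank_eq_one hσN, rfl⟩ with h0 | h1
    · exact (Nat.cast_eq_zero.1 (hN.symm.trans h0)).trans_le zero_le_one
    · exact (Nat.cast_eq_one.1 (hN.symm.trans h1)).le
  · have hX1 : finrank ℂ X = 1 := X.finrank_eq_one_of_commute fun a b =>
      X.ρ.commute_of_map_commutatorElement_eq_one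
        (X.ρ_eq_one_of_character_eq_character_one hconst (h.commutatorElement_mem hbot a b))
    calc _ ≤ finrank ℂ (σ.V →ₗ[ℂ] X.V) := Submodule.finrank_le _
      _ = 1 := by rw [Module.finrank_linearMap, hσ1, hX1]

/-- If a finite nilpotent group G is unramified over a nontrivial abelian normal
subgroup N, then G is unramified over every abelian normal subgroup M ⊇ N. -/
theorem stmt_19 {G : Type} [Group G] [Finite G] [Group.IsNilpotent G]
    (N : Subgroup G) [N.Normal] (hab : ∀ a b : ↥N, a * b = b * a)
    (hbot : N ≠ ⊥) (h : UnramifiedOver G N) (M : Subgroup G) [M.Normal]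
    (habM : ∀ a b : ↥M, a * b = b * a) (hNM : N ≤ M) :
    UnramifiedOver G M :=
  stmt_19_general N hbot h M habM hNM
end
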